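/- Let λ_max = (1/(n(1−α))) · max{ |AᵀWY|, max_{1≤j≤p} |XⱼᵀWY| }, where AᵀWY = Σᵢ wᵢAᵢYᵢ and XⱼᵀWY = Σᵢ wᵢXᵢⱼYᵢ. Then the zero parameter vector θ = 0 ∈ ℝ^{2p+1} is a coordinatewise minimizer of Q (i.e., for each coordinate of θ, the value 0 globally minimizes Q as a function of that coordinate with all other coordinates held at 0) if and only if λ ≥ λ_max. -/

import Mathlib

/-- Soft-thresholding operator `S(x, u) = sign(x) · (|x| − u)₊`. -/
noncomputable def softThresh (x u : ℝ) : ℝ := Real.sign x * max (|x| - u) 0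

/-- Reparametrized weighted loss
`L*(θ) = (1/(2n)) Σᵢ wᵢ (Yᵢ − ψ₀Aᵢ − Σⱼ Xᵢⱼβⱼ − Σⱼ ψ₀τⱼβⱼ AᵢXᵢⱼ)²`. -/
noncomputable def Lstar (n p : ℕ) (Y A : Fin n → ℝ) (X : Fin n → Fin p → ℝ)
    (w : Fin n → ℝ) (β : Fin p → ℝ) (ψ0 : ℝ) (τ : Fin p → ℝ) : ℝ :=
  1 / (2 * (n : ℝ)) * ∑ i, w i *
    (Y i - ψ0 * A i - (∑ j, X i j * β j) - ∑ j, ψ0 * τ j * β j * A i * X i j) ^ 2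

/-- Penalized objective
`Q(θ) = L*(θ) + λ(1−α)(Σⱼ|βⱼ| + |ψ₀|) + λα Σⱼ|τⱼ|`. -/
noncomputable def Qobj (n p : ℕ) (Y A : Fin n → ℝ) (X : Fin n → Fin p → ℝ)
    (w : Fin n → ℝ) (lam alpha : ℝ) (β : Fin p → ℝ) (ψ0 : ℝ) (τ : Fin p → ℝ) : ℝ :=
  Lstar n p Y A X w β ψ0 τ
    + lam * (1 - alpha) * ((∑ j, |β j|) + |ψ0|) + lam * alpha * ∑ j, |τ j|

/-!
The interaction term `ψ₀ τⱼ βⱼ` of `L*` vanishes as soon as two of the three blocks of parameters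
are zero. Along the `ψ₀`-axis and the `βⱼ`-axes, `Q` is therefore the one-dimensional weighted
lasso `t ↦ (1/(2n)) Σ wᵢ (Yᵢ - t Zᵢ)² + λ(1-α)|t|` with `Z = A` or `Z = Xⱼ`, a convex quadratic
plus a kink at `0`, which is minimal at `0` iff the slope `|Σ wᵢ Zᵢ Yᵢ| / n` of the quadratic at
`0` is at most `λ(1-α)`. Along a `τⱼ`-axis only the penalty `λα|t| ≥ 0` changes.
-/

theorem forall_nonneg_quadratic_add_abs_iff {a : ℝ} (ha : 0 ≤ a) (b m : ℝ) :
    (∀ t : ℝ, 0 ≤ a * t ^ 2 - b * t + m * |t|) ↔ |b| ≤ m := by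
  constructor
  · intro h
    -- if `|b| > m`, the expression is negative at `t = (b + m) / (a + 1)` or `(b - m) / (a + 1)`
    have ha1 : 0 < a + 1 := by linarith
    rw [abs_le]
    constructor
    · by_contra! hc
      set t := (b + m) / (a + 1) with ht
      have ht_neg : t < 0 := div_neg_of_neg_of_pos (by linarith) ha1
      have ht_mul : t * (a + 1) = b + m := div_mul_cancel₀ _ ha1.ne'
      have := h t
      rw [abs_of_neg ht_neg] at this
      nlinarith [mul_pos_of_neg_of_neg ht_neg ht_neg]
    · by_contra! hc
      set t := (b - m) / (a + 1) with ht
      have ht_pos : 0 < t := div_pos (by linarith) ha1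
      have ht_mul : t * (a + 1) = b - m := div_mul_cancel₀ _ ha1.ne'
      have := h t
      rw [abs_of_pos ht_pos] at this
      nlinarith [mul_pos ht_pos ht_pos]
  · intro h t
    have hbt : b * t ≤ |b| * |t| := (le_abs_self _).trans (abs_mul b t).le
    nlinarith [mul_nonneg ha (sq_nonneg t), mul_nonneg (sub_nonneg.2 h) (abs_nonneg t)]

theorem sum_mul_sub_mul_sq {ι : Type*} [Fintype ι] (w Y Z : ι → ℝ) (t : ℝ) :
    ∑ i, w i * (Y i - t * Z i) ^ 2 =
      ∑ i, w i * Y i ^ 2 - 2 * t * ∑ i, w i * Z i * Y i + t ^ 2 * ∑ i, w i * Z i ^ 2 := by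
  rw [Finset.mul_sum, Finset.mul_sum, ← Finset.sum_sub_distrib, ← Finset.sum_add_distrib]
  exact Finset.sum_congr rfl fun i _ => by ring

theorem forall_weighted_lasso_ge_zero_iff {ι : Type*} [Fintype ι] {N : ℝ} (hN : 0 < N)
    {w : ι → ℝ} (hw : ∀ i, 0 ≤ w i) (Y Z : ι → ℝ) (m : ℝ) :
    (∀ t : ℝ, 1 / (2 * N) * ∑ i, w i * Y i ^ 2 ≤
        1 / (2 * N) * ∑ i, w i * (Y i - t * Z i) ^ 2 + m * |t|) ↔
      |∑ i, w i * Z i * Y i| ≤ N * m := by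
  have ha : 0 ≤ 1 / (2 * N) * ∑ i, w i * Z i ^ 2 :=
    mul_nonneg (by positivity) (Finset.sum_nonneg fun i _ => mul_nonneg (hw i) (sq_nonneg _))
  have key : ∀ t : ℝ, 1 / (2 * N) * ∑ i, w i * (Y i - t * Z i) ^ 2 + m * |t| -
      1 / (2 * N) * ∑ i, w i * Y i ^ 2 = (1 / (2 * N) * ∑ i, w i * Z i ^ 2) * t ^ 2
        - (1 / N * ∑ i, w i * Z i * Y i) * t + m * |t| := fun t => by
    rw [sum_mul_sub_mul_sq]
    field_simp
    ring
  simp_rw [← sub_nonneg (b := 1 / (2 * N) * ∑ i, w i * Y i ^ 2), key]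
  rw [forall_nonneg_quadratic_add_abs_iff ha, abs_mul, abs_of_pos (one_div_pos.2 hN), one_div,
    inv_mul_le_iff₀ hN]

section Axes

variable (n p : ℕ) (Y A : Fin n → ℝ) (X : Fin n → Fin p → ℝ) (w : Fin n → ℝ) (lam alpha : ℝ)

theorem Qobj_zero :
    Qobj n p Y A X w lam alpha 0 0 0 = 1 / (2 * (n : ℝ)) * ∑ i, w i * Y i ^ 2 := by
  simp [Qobj, Lstar]

theorem Qobj_psi0_axis (t : ℝ) :
    Qobj n p Y A X w lam alpha 0 t 0 =
      1 / (2 * (n : ℝ)) * ∑ i, w i * (Y i - t * A i) ^ 2 + lam * (1 - alpha) * |t| := by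
  simp [Qobj, Lstar, mul_comm]

theorem Qobj_beta_axis (j : Fin p) (t : ℝ) :
    Qobj n p Y A X w lam alpha (Function.update 0 j t) 0 0 =
      1 / (2 * (n : ℝ)) * ∑ i, w i * (Y i - t * X i j) ^ 2 + lam * (1 - alpha) * |t| := by
  simp [Qobj, Lstar, Function.update_apply, apply_ite abs, mul_comm]

theorem Qobj_zero_le_Qobj_tau (h : 0 ≤ lam * alpha) (τ : Fin p → ℝ) :
    Qobj n p Y A X w lam alpha 0 0 0 ≤ Qobj n p Y A X w lam alpha 0 0 τ := by
  simpa [Qobj, Lstar] using mul_nonneg h (Finset.sum_nonneg fun j _ => abs_nonneg (τ j))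

end Axes

theorem stmt9_general (n p : ℕ) (hn : 1 ≤ n) (hp : 0 < p) (Y A : Fin n → ℝ)
    (X : Fin n → Fin p → ℝ)
    (w : Fin n → ℝ) (hw : ∀ i, 0 ≤ w i)
    (lam alpha : ℝ) (hlam : 0 ≤ lam) (halpha : 0 < alpha ∧ alpha < 1) :
    let lamMax : ℝ := 1 / ((n : ℝ) * (1 - alpha)) *
      max |∑ i, w i * A i * Y i|
        (Finset.sup' (Finset.univ : Finset (Fin p)) ⟨⟨0, hp⟩, Finset.mem_univ _⟩
          fun j => |∑ i, w i * X i j * Y i|)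
    ((∀ t : ℝ, Qobj n p Y A X w lam alpha 0 0 0 ≤ Qobj n p Y A X w lam alpha 0 t 0) ∧
     (∀ (j : Fin p) (t : ℝ), Qobj n p Y A X w lam alpha 0 0 0 ≤
        Qobj n p Y A X w lam alpha (Function.update (0 : Fin p → ℝ) j t) 0 0) ∧
     (∀ (j : Fin p) (t : ℝ), Qobj n p Y A X w lam alpha 0 0 0 ≤
        Qobj n p Y A X w lam alpha 0 0 (Function.update (0 : Fin p → ℝ) j t)))
      ↔ lam ≥ lamMax := by
  intro lamMax
  have hn_pos : (0 : ℝ) < n := by exact_mod_cast hn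
  have h_one_sub : 0 < 1 - alpha := sub_pos.2 halpha.2
  have h_psi0 := forall_weighted_lasso_ge_zero_iff hn_pos hw Y A (lam * (1 - alpha))
  have h_beta j := forall_weighted_lasso_ge_zero_iff hn_pos hw Y (X · j) (lam * (1 - alpha))
  have h_tau (j : Fin p) (t : ℝ) :=
    Qobj_zero_le_Qobj_tau n p Y A X w lam alpha (mul_nonneg hlam halpha.1.le)
      (Function.update 0 j t)
  have h_lamMax : lam ≥ lamMax ↔ |∑ i, w i * A i * Y i| ≤ n * (lam * (1 - alpha)) ∧
      ∀ j, |∑ i, w i * X i j * Y i| ≤ n * (lam * (1 - alpha)) := by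
    rw [ge_iff_le, show lamMax = _ / _ from one_div_mul_eq_div _ _, div_le_iff₀ (by positivity),
      max_le_iff, mul_left_comm]
    exact and_congr_right'
      ((Finset.sup'_le_iff ..).trans (by simp only [Finset.mem_univ, true_implies]))
  simp only [Qobj_zero] at h_tau ⊢
  simp only [Qobj_psi0_axis, Qobj_beta_axis, h_psi0, h_beta, h_tau, h_lamMax, implies_true,
    and_true]

/-- `λ_max` characterization: the zero parameter vector is a coordinatewise
minimizer of `Q` iff
`λ ≥ λ_max = (1/(n(1−α))) · max{|AᵀWY|, maxⱼ |XⱼᵀWY|}`. -/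
theorem stmt9 (n p : ℕ) (hn : 1 ≤ n) (hp : 0 < p) (Y A : Fin n → ℝ)
    (X : Fin n → Fin p → ℝ)
    (w : Fin n → ℝ) (hw : ∀ i, 0 ≤ w i) (hA : ∀ i, A i = 0 ∨ A i = 1)
    (lam alpha : ℝ) (hlam : 0 ≤ lam) (halpha : 0 < alpha ∧ alpha < 1) :
    let lamMax : ℝ := 1 / ((n : ℝ) * (1 - alpha)) *
      max |∑ i, w i * A i * Y i|
        (Finset.sup' (Finset.univ : Finset (Fin p)) ⟨⟨0, hp⟩, Finset.mem_univ _⟩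
          fun j => |∑ i, w i * X i j * Y i|)
    ((∀ t : ℝ, Qobj n p Y A X w lam alpha 0 0 0 ≤ Qobj n p Y A X w lam alpha 0 t 0) ∧
     (∀ (j : Fin p) (t : ℝ), Qobj n p Y A X w lam alpha 0 0 0 ≤
        Qobj n p Y A X w lam alpha (Function.update (0 : Fin p → ℝ) j t) 0 0) ∧
     (∀ (j : Fin p) (t : ℝ), Qobj n p Y A X w lam alpha 0 0 0 ≤
        Qobj n p Y A X w lam alpha 0 0 (Function.update (0 : Fin p → ℝ) j t)))
      ↔ lam ≥ lamMax :=
  stmt9_general n p hn hp Y A X w hw lam alpha hlam halpha
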